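/- arXiv:math-ph/0607047 — 7 statements merged into one kernel-verified Lean document; each statement's English description precedes it below -/
import Mathlib

section
/- The sequence a_n(t) = tanh(t)^{n-1}/cosh(t), for n ≥ 1, satisfies the infinite system of ODEs ȧ_n(t) = (n-1)a_{n-1}(t) - n a_{n+1}(t) (with the convention a_0 = 0) for all t ≥ 0, with initial condition a_1(0)=1 and a_n(0)=0 for n ≥ 2. -/
/-! With `a_{m+1} = tanh^m · sech`, the system follows from `tanh' = 1 - tanh²` and
`sech' = -tanh · sech`: the product rule gives
`(tanh^m sech)' = m tanh^(m-1) sech - (m+1) tanh^(m+1) sech`, i.e. `ȧ_{m+1} = m a_m - (m+1) a_{m+2}`. -/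

open Real

theorem Real.hasDerivAt_tanh (t : ℝ) : HasDerivAt tanh (1 - tanh t ^ 2) t := by
  have h := (hasDerivAt_sinh t).div (hasDerivAt_cosh t) (cosh_pos t).ne'
  rw [show (sinh / cosh : ℝ → ℝ) = tanh from funext fun s => (tanh_eq_sinh_div_cosh s).symm] at h
  refine h.congr_deriv ?_
  rw [tanh_eq_sinh_div_cosh]
  field_simp

theorem Real.hasDerivAt_inv_cosh (t : ℝ) :
    HasDerivAt (fun s => (cosh s)⁻¹) (-(tanh t * (cosh t)⁻¹)) t := by
  refine ((hasDerivAt_cosh t).inv (cosh_pos t).ne').congr_deriv ?_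
  rw [tanh_eq_sinh_div_cosh]
  ring

theorem Real.hasDerivAt_tanh_pow_div_cosh (m : ℕ) (t : ℝ) :
    HasDerivAt (fun s => tanh s ^ m / cosh s)
      (m * (tanh t ^ (m - 1) / cosh t) - (m + 1) * (tanh t ^ (m + 1) / cosh t)) t := by
  simp only [div_eq_mul_inv]
  refine (((hasDerivAt_tanh t).pow m).mul (hasDerivAt_inv_cosh t)).congr_deriv ?_
  cases m <;> simp only [Pi.pow_apply] <;> push_cast <;> ring

theorem stmt0_general (a : ℕ → ℝ → ℝ)
    (ha : ∀ n : ℕ, 1 ≤ n → ∀ t : ℝ, a n t = Real.tanh t ^ (n - 1) / Real.cosh t) :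
    a 1 0 = 1 ∧ (∀ n : ℕ, 2 ≤ n → a n 0 = 0) ∧
    ∀ t : ℝ, 0 ≤ t → ∀ n : ℕ, 1 ≤ n →
      HasDerivAt (a n) (((n : ℝ) - 1) * a (n - 1) t - (n : ℝ) * a (n + 1) t) t := by
  refine ⟨by simp [ha 1 le_rfl], fun n hn => ?_, fun t _ n hn => ?_⟩
  · rw [ha n (by omega), tanh_zero, zero_pow (by omega), zero_div]
  obtain ⟨m, rfl⟩ := Nat.exists_eq_add_of_le' hn
  have ha_succ : a (m + 1) = fun s => tanh s ^ m / cosh s := funext fun s => by simp [ha _ hn s]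
  rw [ha_succ]
  convert hasDerivAt_tanh_pow_div_cosh m t using 1
  cases m with
  | zero => simp [ha 2 (by norm_num)]
  | succ k => simp [ha (k + 1) (by omega), ha (k + 3) (by omega)]

/-- The sequence `a_n(t) = tanh(t)^{n-1}/cosh(t)` (with `a_0 = 0`) solves the
shell model `ȧ_n = (n-1)a_{n-1} - n a_{n+1}` for all `t ≥ 0`, with initial
condition `a_1(0) = 1` and `a_n(0) = 0` for `n ≥ 2`. -/
theorem stmt0 (a : ℕ → ℝ → ℝ)
    (h0 : ∀ t : ℝ, a 0 t = 0)
    (ha : ∀ n : ℕ, 1 ≤ n → ∀ t : ℝ, a n t = Real.tanh t ^ (n - 1) / Real.cosh t) :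
    a 1 0 = 1 ∧ (∀ n : ℕ, 2 ≤ n → a n 0 = 0) ∧
    ∀ t : ℝ, 0 ≤ t → ∀ n : ℕ, 1 ≤ n →
      HasDerivAt (a n) (((n : ℝ) - 1) * a (n - 1) t - (n : ℝ) * a (n + 1) t) t :=
  stmt0_general a ha
end

section
/- The constant sequence a_n(t) = e^{-t} for all n ≥ 1 solves the shell model ȧ_n = (n-1)a_{n-1} - n a_{n+1} (with a_0 = 0) with initial condition a_n(0) = 1 for all n, and its energy flux satisfies N·a_N(t)·a_{N+1}(t) = N·e^{-2t} → +∞ as N → ∞ for every fixed t; i.e., the solution displays an infinite dissipation rate. -/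
open Filter Real

lemma hasDerivAt_exp_neg (t : ℝ) : HasDerivAt (fun s => exp (-s)) (-exp (-t)) t := by
  simpa using ((hasDerivAt_id t).neg).exp

/-- The coefficient `n - 1` kills the boundary term `a 0` when `n = 1`. -/
lemma shell_rhs_eq_neg_of_const {a : ℕ → ℝ} {c : ℝ} (ha : ∀ m, 1 ≤ m → a m = c) {n : ℕ}
    (hn : 1 ≤ n) : ((n : ℝ) - 1) * a (n - 1) - n * a (n + 1) = -c := by
  obtain ⟨k, rfl⟩ := Nat.exists_eq_add_of_le' hn
  rcases k.eq_zero_or_pos with rfl | hk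
  · simp [ha 2 (by norm_num)]
  · rw [Nat.add_sub_cancel, ha k hk, ha (k + 1 + 1) (by omega)]
    push_cast
    ring

lemma natCast_mul_exp_neg_mul_exp_neg (N : ℕ) (t : ℝ) :
    (N : ℝ) * exp (-t) * exp (-t) = N * exp (-2 * t) := by
  rw [mul_assoc, ← exp_add]
  ring_nf

theorem stmt3_general (a : ℕ → ℝ → ℝ)
    (ha : ∀ n : ℕ, 1 ≤ n → ∀ t : ℝ, a n t = Real.exp (-t)) :
    (∀ n : ℕ, 1 ≤ n → a n 0 = 1) ∧
    (∀ t : ℝ, ∀ n : ℕ, 1 ≤ n →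
      HasDerivAt (a n) (((n : ℝ) - 1) * a (n - 1) t - (n : ℝ) * a (n + 1) t) t) ∧
    (∀ t : ℝ, ∀ N : ℕ, 1 ≤ N →
      (N : ℝ) * a N t * a (N + 1) t = (N : ℝ) * Real.exp (-2 * t)) ∧
    (∀ t : ℝ, Filter.Tendsto (fun N : ℕ => (N : ℝ) * a N t * a (N + 1) t)
      Filter.atTop Filter.atTop) := by
  have flux (t : ℝ) (N : ℕ) (hN : 1 ≤ N) : (N : ℝ) * a N t * a (N + 1) t = N * exp (-2 * t) := by
    rw [ha N hN, ha (N + 1) (by omega), natCast_mul_exp_neg_mul_exp_neg]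
  refine ⟨fun n hn => by simp [ha n hn], fun t n hn => ?_, flux, fun t => ?_⟩
  · rw [shell_rhs_eq_neg_of_const (fun m hm => ha m hm t) hn, funext (ha n hn)]
    exact hasDerivAt_exp_neg t
  · refine (tendsto_natCast_atTop_atTop.atTop_mul_const (exp_pos (-2 * t))).congr' ?_
    filter_upwards [eventually_ge_atTop 1] with N hN
    exact (flux t N hN).symm

/-- The constant-in-`n` sequence `a_n(t) = e^{-t}` (for `n ≥ 1`, with `a_0 = 0`)
solves the shell model `ȧ_n = (n-1)a_{n-1} - n a_{n+1}` with `a_n(0) = 1`, and its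
energy flux `N·a_N·a_{N+1} = N e^{-2t}` tends to `+∞` as `N → ∞` for every fixed `t`:
the solution displays an infinite dissipation rate. -/
theorem stmt3 (a : ℕ → ℝ → ℝ)
    (h0 : ∀ t : ℝ, a 0 t = 0)
    (ha : ∀ n : ℕ, 1 ≤ n → ∀ t : ℝ, a n t = Real.exp (-t)) :
    (∀ n : ℕ, 1 ≤ n → a n 0 = 1) ∧
    (∀ t : ℝ, ∀ n : ℕ, 1 ≤ n →
      HasDerivAt (a n) (((n : ℝ) - 1) * a (n - 1) t - (n : ℝ) * a (n + 1) t) t) ∧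
    (∀ t : ℝ, ∀ N : ℕ, 1 ≤ N →
      (N : ℝ) * a N t * a (N + 1) t = (N : ℝ) * Real.exp (-2 * t)) ∧
    (∀ t : ℝ, Filter.Tendsto (fun N : ℕ => (N : ℝ) * a N t * a (N + 1) t)
      Filter.atTop Filter.atTop) :=
  stmt3_general a ha
end

section
/- The sequence a_n(t) = (-1)^{n+1} e^{t} for all n ≥ 1 solves the shell model ȧ_n = (n-1)a_{n-1} - n a_{n+1} (with a_0 = 0) with initial condition a_n(0) = (-1)^{n+1}, and is explosive: N·a_N(t)·a_{N+1}(t) = -N e^{2t}, so -N a_N a_{N+1} → +∞ as N → ∞. -/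
/-- The sequence `a_n(t) = (-1)^{n+1} e^t` (for `n ≥ 1`, with `a_0 = 0`) solves the
shell model `ȧ_n = (n-1)a_{n-1} - n a_{n+1}` with `a_n(0) = (-1)^{n+1}`, and is
explosive: `N·a_N·a_{N+1} = -N e^{2t}`, so `-N a_N a_{N+1} → +∞` as `N → ∞`. -/
theorem stmt4 (a : ℕ → ℝ → ℝ)
    (h0 : ∀ t : ℝ, a 0 t = 0)
    (ha : ∀ n : ℕ, 1 ≤ n → ∀ t : ℝ, a n t = (-1 : ℝ) ^ (n + 1) * Real.exp t) :
    (∀ n : ℕ, 1 ≤ n → a n 0 = (-1 : ℝ) ^ (n + 1)) ∧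
    (∀ t : ℝ, ∀ n : ℕ, 1 ≤ n →
      HasDerivAt (a n) (((n : ℝ) - 1) * a (n - 1) t - (n : ℝ) * a (n + 1) t) t) ∧
    (∀ t : ℝ, ∀ N : ℕ, 1 ≤ N →
      (N : ℝ) * a N t * a (N + 1) t = -(N : ℝ) * Real.exp (2 * t)) ∧
    (∀ t : ℝ, Filter.Tendsto (fun N : ℕ => -((N : ℝ) * a N t * a (N + 1) t))
      Filter.atTop Filter.atTop) := by
  have key : ∀ t : ℝ, ∀ n : ℕ, 1 ≤ n →
      ((n : ℝ) - 1) * a (n - 1) t - (n : ℝ) * a (n + 1) t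
        = (-1 : ℝ) ^ (n + 1) * Real.exp t := by
    intro t n hn
    match n, hn with
    | 1, _ =>
      rw [show (1 : ℕ) - 1 = 0 from rfl, h0, ha 2 (by norm_num)]
      push_cast; ring
    | (m + 2), _ =>
      rw [show m + 2 - 1 = m + 1 from rfl, ha (m + 1) (by omega),
        ha (m + 2 + 1) (by omega)]
      push_cast; ring
  have third : ∀ t : ℝ, ∀ N : ℕ, 1 ≤ N →
      (N : ℝ) * a N t * a (N + 1) t = -(N : ℝ) * Real.exp (2 * t) := by
    intro t N hN
    rw [ha N hN, ha (N + 1) (by omega),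
      show Real.exp (2 * t) = Real.exp t * Real.exp t by rw [two_mul, Real.exp_add]]
    have hsign : ((-1 : ℝ)) ^ (N + 1) * (-1) ^ (N + 1 + 1) = -1 := by
      rw [← pow_add]; exact Odd.neg_one_pow ⟨N + 1, by ring⟩
    linear_combination ((N : ℝ) * Real.exp t * Real.exp t) * hsign
  refine ⟨fun n hn => by rw [ha n hn, Real.exp_zero, mul_one], ?_, third, ?_⟩
  · intro t n hn
    rw [key t n hn, funext (ha n hn)]
    simpa using (Real.hasDerivAt_exp t).const_mul ((-1 : ℝ) ^ (n + 1))
  · intro t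
    have h1 : Filter.Tendsto (fun N : ℕ => (N : ℝ) * Real.exp (2 * t))
        Filter.atTop Filter.atTop :=
      Filter.Tendsto.atTop_mul_const (Real.exp_pos _) tendsto_natCast_atTop_atTop
    refine h1.congr' ?_
    filter_upwards [Filter.eventually_ge_atTop 1] with N hN
    rw [third t N hN]; ring
end

section
/- The sequence defined by a_{2n}(t) = 0 and a_{2n+1}(t) = (2n)!/(2^{2n}(n!)²) for all n ≥ 0 is a fixed point of the shell model: (n-1)a_{n-1} - n a_{n+1} = 0 for all n ≥ 1 (with a_0 = 0). -/
/-- The sequence defined by `a_{2n} = 0` and `a_{2n+1} = (2n)!/(2^{2n}(n!)²)` is a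
fixed point of the shell model: `(n-1)a_{n-1} - n a_{n+1} = 0` for all `n ≥ 1`
(with `a_0 = 0`). -/
theorem stmt6 (a : ℕ → ℝ)
    (heven : ∀ n : ℕ, a (2 * n) = 0)
    (hodd : ∀ n : ℕ,
      a (2 * n + 1) = (Nat.factorial (2 * n) : ℝ) / (2 ^ (2 * n) * (Nat.factorial n : ℝ) ^ 2)) :
    ∀ n : ℕ, 1 ≤ n → ((n : ℝ) - 1) * a (n - 1) - (n : ℝ) * a (n + 1) = 0 := by
  intro n hn
  rcases Nat.even_or_odd n with ⟨m, hm⟩ | ⟨m, hm⟩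
  · -- n = 2m even, m ≥ 1
    subst hm
    obtain ⟨k, rfl⟩ : ∃ k, m = k + 1 := ⟨m - 1, by omega⟩
    have e1 : (k + 1) + (k + 1) - 1 = 2 * k + 1 := by omega
    have e2 : (k + 1) + (k + 1) + 1 = 2 * (k + 1) + 1 := by omega
    rw [e1, e2, hodd k, hodd (k + 1)]
    have h1 : (2 * (k + 1)).factorial = (2 * k + 2) * ((2 * k + 1) * (2 * k).factorial) := by
      have h : 2 * (k + 1) = (2 * k + 1) + 1 := by omega
      rw [h, Nat.factorial_succ, Nat.factorial_succ]
    have h2 : (k + 1).factorial = (k + 1) * k.factorial := Nat.factorial_succ k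
    have h3 : (2 : ℝ) ^ (2 * (k + 1)) = 4 * 2 ^ (2 * k) := by
      have h : 2 * (k + 1) = 2 * k + 2 := by omega
      rw [h, pow_add]; ring
    have hk : (k.factorial : ℝ) ≠ 0 := Nat.cast_ne_zero.mpr k.factorial_ne_zero
    have hp : (2 : ℝ) ^ (2 * k) ≠ 0 := by positivity
    rw [h1, h2, h3]
    push_cast
    field_simp
    ring
  · -- n = 2m + 1 odd: neighbors are even
    subst hm
    have e1 : 2 * m + 1 - 1 = 2 * m := by omega
    have e2 : 2 * m + 1 + 1 = 2 * (m + 1) := by omega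
    rw [e1, e2, heven m, heven (m + 1)]
    ring
end

section
/- For each t ≥ 0, the substitution map f ↦ S_t f, with (S_t f)(z) = ψ_t(z) f(φ_t(z))/cosh(t), is an isometry of the Hardy space H² of the unit disk: ∫_0^{2π} |S_t f(e^{iθ})|² dθ = ∫_0^{2π} |f(e^{iθ})|² dθ. -/
/-!
On the unit circle the map `z ↦ (z - a) / (1 - a z)`, `a = tanh t`, lifts to the angle map
`θ ↦ mobiusAngle a θ`, a diffeomorphism of `[0, 2π]` whose derivative is the Poisson factor
`(1 - a²) / |1 - a e^{iθ}|²`. Since `1 / cosh² t = 1 - tanh² t`, this factor is exactly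
`|ψ_t(e^{iθ})|² / cosh² t`, so the claim is the change of variables formula for this angle map.
-/

open Complex

lemma mul_cos_lt_one {a : ℝ} (ha : |a| < 1) (θ : ℝ) : a * Real.cos θ < 1 :=
  calc a * Real.cos θ ≤ |a| * |Real.cos θ| := by rw [← abs_mul]; exact le_abs_self _
    _ ≤ |a| * 1 := by gcongr; exact Real.abs_cos_le_one θ
    _ < 1 := by linarith

lemma one_sub_exp_mul_I_mul_ne_zero {a : ℝ} (ha : |a| < 1) (θ : ℝ) :
    1 - exp (θ * I) * a ≠ 0 := by
  intro h
  have : ‖exp (θ * I) * a‖ = 1 := by rw [← sub_eq_zero.1 h]; simp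
  rw [norm_mul, norm_exp_ofReal_mul_I, one_mul, norm_real, Real.norm_eq_abs] at this
  linarith

lemma norm_one_sub_exp_mul_I_mul_sq (a θ : ℝ) :
    ‖1 - exp (θ * I) * a‖ ^ 2 = 1 - 2 * a * Real.cos θ + a ^ 2 := by
  rw [exp_mul_I, ← ofReal_cos, ← ofReal_sin]
  have e : (1 : ℂ) - (Real.cos θ + Real.sin θ * I) * a
      = ((1 - a * Real.cos θ : ℝ) : ℂ) + ((-(a * Real.sin θ) : ℝ) : ℂ) * I := by
    push_cast; ring
  rw [e, Complex.sq_norm, normSq_add_mul_I]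
  linear_combination a ^ 2 * Real.sin_sq_add_cos_sq θ

lemma exp_two_arctan_mul_I (u : ℝ) :
    exp ((2 * Real.arctan u : ℝ) * I) * (1 - u * I) = 1 + u * I := by
  have hsqrt : ((√(1 + u ^ 2) : ℝ) : ℂ) ^ 2 = (1 + u * I) * (1 - u * I) := by
    rw [← ofReal_pow, Real.sq_sqrt (by positivity)]
    push_cast
    linear_combination (u : ℂ) ^ 2 * I_sq
  have hsqrt0 : ((√(1 + u ^ 2) : ℝ) : ℂ) ≠ 0 := by
    exact_mod_cast (Real.sqrt_pos.2 (by positivity : (0 : ℝ) < 1 + u ^ 2)).ne'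
  rw [show ((2 * Real.arctan u : ℝ) : ℂ) * I = Real.arctan u * I + Real.arctan u * I by
      push_cast; ring, exp_add, exp_mul_I, ← ofReal_cos, ← ofReal_sin, Real.cos_arctan,
    Real.sin_arctan]
  push_cast
  field_simp
  linear_combination (-(1 + u * I)) * hsqrt

/-- The lift to angles of the disc automorphism `z ↦ (z - a) / (1 - a z)` on the unit circle:
with `w = 1 - a e^{iθ}` one has `(e^{iθ} - a) / w = e^{iθ} w̄ / w`, and
`arg w = -arctan (a sin θ / (1 - a cos θ))`. -/
noncomputable def mobiusAngle (a θ : ℝ) : ℝ :=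
  θ + 2 * Real.arctan (a * Real.sin θ / (1 - a * Real.cos θ))

lemma exp_mobiusAngle_mul_I {a : ℝ} (ha : |a| < 1) (θ : ℝ) :
    exp (mobiusAngle a θ * I) = (exp (θ * I) - a) / (1 - exp (θ * I) * a) := by
  set c := Real.cos θ
  set s := Real.sin θ
  set u := a * s / (1 - a * c) with hu
  have hud : (u : ℂ) * (1 - a * c) = a * s := by
    rw [hu]; push_cast
    exact div_mul_cancel₀ _ (by exact_mod_cast (sub_pos.2 (mul_cos_lt_one ha θ)).ne')
  have hE := exp_two_arctan_mul_I u
  set E := exp ((2 * Real.arctan u : ℝ) * I)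
  have hsc : (s : ℂ) ^ 2 + c ^ 2 = 1 := by exact_mod_cast Real.sin_sq_add_cos_sq θ
  rw [mobiusAngle, ofReal_add, add_mul, exp_add, eq_div_iff (one_sub_exp_mul_I_mul_ne_zero ha θ),
    exp_mul_I, ← ofReal_cos, ← ofReal_sin]
  -- `1 - a e^{iθ} = (1 - a cos θ) (1 - u i)` and `e^{iθ} (1 - a cos θ) (1 + u i) = e^{iθ} - a`
  linear_combination (c + s * I) * (1 - a * c) * hE + (c + s * I) * (E + 1) * I * hud
    - a * hsc + a * s ^ 2 * I_sq

lemma hasDerivAt_mobiusAngle {a : ℝ} (ha : |a| < 1) (θ : ℝ) :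
    HasDerivAt (mobiusAngle a) ((1 - a ^ 2) / ‖1 - exp (θ * I) * a‖ ^ 2) θ := by
  have hD : 1 - a * Real.cos θ ≠ 0 := (sub_pos.2 (mul_cos_lt_one ha θ)).ne'
  have hQ : 1 - 2 * a * Real.cos θ + a ^ 2 ≠ 0 := by
    rw [← norm_one_sub_exp_mul_I_mul_sq]
    exact pow_ne_zero 2 (norm_ne_zero_iff.2 (one_sub_exp_mul_I_mul_ne_zero ha θ))
  have h := (hasDerivAt_id θ).add
    ((((Real.hasDerivAt_sin θ).const_mul a).div
      (((Real.hasDerivAt_cos θ).const_mul a).const_sub 1) hD).arctan.const_mul 2)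
  refine h.congr_deriv ?_
  simp only [Pi.div_apply]
  rw [norm_one_sub_exp_mul_I_mul_sq]
  field_simp
  linear_combination (2 * a ^ 3 * Real.cos θ - 2 * a ^ 2) * Real.sin_sq_add_cos_sq θ

lemma mobiusAngle_zero (a : ℝ) : mobiusAngle a 0 = 0 := by simp [mobiusAngle]

lemma mobiusAngle_two_pi (a : ℝ) : mobiusAngle a (2 * Real.pi) = 2 * Real.pi := by
  simp [mobiusAngle]

theorem integral_mobius_change_of_variables {E : Type*} [NormedAddCommGroup E] [NormedSpace ℝ E]
    {a : ℝ} (ha : |a| < 1) {g : ℂ → E} (hg : ContinuousOn g (Metric.sphere 0 1)) :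
    ∫ θ in (0 : ℝ)..2 * Real.pi, ((1 - a ^ 2) / ‖1 - exp (θ * I) * a‖ ^ 2) •
        g ((exp (θ * I) - a) / (1 - exp (θ * I) * a))
      = ∫ θ in (0 : ℝ)..2 * Real.pi, g (exp (θ * I)) := by
  have hg' : Continuous fun θ : ℝ ↦ g (exp (θ * I)) :=
    hg.comp_continuous (by fun_prop) fun θ ↦ by simp
  have hderiv : Continuous fun θ : ℝ ↦ (1 - a ^ 2) / ‖1 - exp (θ * I) * a‖ ^ 2 :=
    continuous_const.div (by fun_prop) fun θ ↦
      pow_ne_zero 2 (norm_ne_zero_iff.2 (one_sub_exp_mul_I_mul_ne_zero ha θ))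
  have h := intervalIntegral.integral_deriv_smul_comp (a := 0) (b := 2 * Real.pi)
    (fun θ _ ↦ hasDerivAt_mobiusAngle ha θ) hderiv.continuousOn hg'
  rw [mobiusAngle_zero, mobiusAngle_two_pi] at h
  rw [← h]
  simp only [Function.comp_apply, exp_mobiusAngle_mul_I ha]

lemma one_sub_tanh_sq (t : ℝ) : 1 - Real.tanh t ^ 2 = 1 / Real.cosh t ^ 2 := by
  rw [Real.tanh_eq_sinh_div_cosh]
  field_simp
  linear_combination Real.cosh_sq_sub_sinh_sq t

theorem stmt12_general (t : ℝ) (f : ℂ → ℂ)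
    (hf : ∀ z ∈ Metric.closedBall (0 : ℂ) 1, AnalyticAt ℂ f z) :
    (∫ θ in (0 : ℝ)..(2 * Real.pi),
        ‖(1 / Real.cosh t) * (1 / (1 - Complex.exp (θ * I) * Real.tanh t)) *
          f ((Complex.exp (θ * I) - Real.tanh t) /
              (1 - Complex.exp (θ * I) * Real.tanh t))‖ ^ 2)
      = ∫ θ in (0 : ℝ)..(2 * Real.pi), ‖f (Complex.exp (θ * I))‖ ^ 2 := by
  have hg : ContinuousOn (fun z ↦ ‖f z‖ ^ 2) (Metric.sphere 0 1) := fun z hz ↦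
    ((hf z (Metric.sphere_subset_closedBall hz)).continuousAt.norm.pow 2).continuousWithinAt
  rw [← integral_mobius_change_of_variables (Real.abs_tanh_lt_one t) hg]
  refine intervalIntegral.integral_congr fun θ _ ↦ ?_
  simp only [one_sub_tanh_sq, norm_mul, norm_div, norm_one, norm_real, Real.norm_eq_abs,
    abs_of_pos (Real.cosh_pos t), smul_eq_mul]
  ring

/-- For each `t ≥ 0`, the substitution operator `f ↦ S_t f` with
`(S_t f)(z) = ψ_t(z) f(φ_t(z))/cosh t` is an isometry in the `H²` sense: the
boundary `L²` norm on the unit circle is preserved,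
`∫₀^{2π} |S_t f(e^{iθ})|² dθ = ∫₀^{2π} |f(e^{iθ})|² dθ`,
for `f` analytic on a neighborhood of the closed unit disk. -/
theorem stmt12 (t : ℝ) (ht : 0 ≤ t) (f : ℂ → ℂ)
    (hf : ∀ z ∈ Metric.closedBall (0 : ℂ) 1, AnalyticAt ℂ f z) :
    (∫ θ in (0 : ℝ)..(2 * Real.pi),
        ‖(1 / Real.cosh t) * (1 / (1 - Complex.exp (θ * I) * Real.tanh t)) *
          f ((Complex.exp (θ * I) - Real.tanh t) /
              (1 - Complex.exp (θ * I) * Real.tanh t))‖ ^ 2)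
      = ∫ θ in (0 : ℝ)..(2 * Real.pi), ‖f (Complex.exp (θ * I))‖ ^ 2 :=
  stmt12_general t f hf
end

section
/- For all integers n, m ≥ 1, ∫_0^∞ tanh(s)^{n+m-2}/cosh(s)² ds = 1/(n+m-1). Consequently, the stationary Gaussian state a_n^{**}(t) = ∫_{-∞}^t tanh(t-s)^{n-1}/cosh(t-s) dW(s) of the white-noise forced shell model has covariance E[a_n^{**} a_m^{**}] = 1/(n+m-1). -/
/-! Since `tanh' = 1 / cosh²`, the function `tanh^(k+1) / (k+1)` is an antiderivative of
`tanh^k / cosh²` that vanishes at `0` and tends to `1 / (k+1)` at infinity because `tanh → 1`.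
The covariance integrand is the case `k = n + m - 2`. -/

open Real MeasureTheory Filter Set Topology

namespace Real

theorem hasDerivAt_tanh_s16 (x : ℝ) : HasDerivAt tanh (1 / cosh x ^ 2) x := by
  rw [show tanh = sinh / cosh from funext tanh_eq_sinh_div_cosh]
  refine ((hasDerivAt_sinh x).div (hasDerivAt_cosh x) (cosh_pos x).ne').congr_deriv ?_
  rw [← cosh_sq_sub_sinh_sq x]
  ring

theorem tanh_eq_one_sub_exp_div_one_add_exp (x : ℝ) :
    tanh x = (1 - exp (-(2 * x))) / (1 + exp (-(2 * x))) := by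
  have hx : exp (-(2 * x)) = exp (-x) * exp (-x) := by rw [← exp_add]; ring_nf
  have hinv : exp x * exp (-x) = 1 := by rw [← exp_add, add_neg_cancel, exp_zero]
  rw [tanh_eq, hx, div_eq_div_iff (by positivity) (by positivity)]
  linear_combination (2 * exp (-x)) * hinv

theorem tendsto_tanh_atTop : Tendsto tanh atTop (𝓝 1) := by
  have hexp : Tendsto (fun x : ℝ => exp (-(2 * x))) atTop (𝓝 0) :=
    tendsto_exp_neg_atTop_nhds_zero.comp (tendsto_id.const_mul_atTop two_pos)
  rw [funext tanh_eq_one_sub_exp_div_one_add_exp]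
  simpa [Pi.div_def] using (tendsto_const_nhds.sub hexp).div (tendsto_const_nhds.add hexp)
    (by norm_num : (1 : ℝ) + 0 ≠ 0)

theorem tanh_nonneg {x : ℝ} (hx : 0 ≤ x) : 0 ≤ tanh x := by
  rw [tanh_eq_sinh_div_cosh]
  exact div_nonneg (sinh_nonneg_iff.mpr hx) (cosh_pos x).le

end Real

theorem integral_Ioi_tanh_pow_div_cosh_sq (k : ℕ) :
    ∫ s in Ioi (0 : ℝ), tanh s ^ k / cosh s ^ 2 = 1 / (k + 1 : ℝ) := by
  have hderiv : ∀ x ∈ Ici (0 : ℝ),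
      HasDerivAt (fun y => tanh y ^ (k + 1) / (k + 1)) (tanh x ^ k / cosh x ^ 2) x := by
    intro x _
    refine (((hasDerivAt_tanh_s16 x).pow (k + 1)).div_const (k + 1 : ℝ)).congr_deriv ?_
    rw [Nat.add_sub_cancel]
    push_cast
    field_simp
  have hnonneg : ∀ x ∈ Ioi (0 : ℝ), 0 ≤ tanh x ^ k / cosh x ^ 2 := fun x hx =>
    div_nonneg (pow_nonneg (tanh_nonneg hx.le) k) (sq_nonneg _)
  have hlim : Tendsto (fun y => tanh y ^ (k + 1) / (k + 1)) atTop (𝓝 (1 / (k + 1 : ℝ))) := by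
    simpa using (tendsto_tanh_atTop.pow (k + 1)).div_const (k + 1 : ℝ)
  simpa using integral_Ioi_of_hasDerivAt_of_nonneg' hderiv hnonneg hlim

/-- For all `n, m ≥ 1`, `∫₀^∞ tanh(s)^{n+m-2}/cosh(s)² ds = 1/(n+m-1)`.
Consequently (via the Itô isometry, taken as hypothesis), the covariance
`E[a_n^{**} a_m^{**}]` of the stationary Gaussian state
`a_n^{**}(t) = ∫_{-∞}^t tanh(t-s)^{n-1}/cosh(t-s) dW(s)` equals `1/(n+m-1)`. -/
theorem stmt16 (n m : ℕ) (hn : 1 ≤ n) (hm : 1 ≤ m) :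
    (∫ s in Set.Ioi (0 : ℝ), Real.tanh s ^ (n + m - 2) / Real.cosh s ^ 2)
      = 1 / ((n : ℝ) + (m : ℝ) - 1) ∧
    ∀ cov : ℝ,
      cov = (∫ s in Set.Ioi (0 : ℝ),
        (Real.tanh s ^ (n - 1) / Real.cosh s) * (Real.tanh s ^ (m - 1) / Real.cosh s)) →
      cov = 1 / ((n : ℝ) + (m : ℝ) - 1) := by
  have hpow : n - 1 + (m - 1) = n + m - 2 := by omega
  have hcast : ((n + m - 2 : ℕ) : ℝ) + 1 = n + m - 1 := by
    rw [← hpow]; push_cast [Nat.cast_sub hn, Nat.cast_sub hm]; ring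
  have hint := integral_Ioi_tanh_pow_div_cosh_sq (n + m - 2)
  rw [hcast] at hint
  refine ⟨hint, fun cov hcov => ?_⟩
  simp_rw [hcov, div_mul_div_comm, ← pow_add, hpow, ← sq, hint]
end

section
/- Let λ > 0 and let (p_n)_{n≥1} with p_0 = 0 and p_1 > 0 satisfy the recurrence -λ p_n = (n-1)(n-1/2) p_{n-1} - n(n+1/2) p_{n+1} for all n ≥ 1. Then the limits lim_{n→∞} (2n+1) p_{2n+1} and lim_{n→∞} (2n) p_{2n} exist, are finite, and are strictly positive. -/
/-!
With `x n = (n + 1) p (n + 1)` the recurrence becomes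
`(n + 2)² (2n + 5) (x (n + 2) - x n) = 2λ (n + 3) x (n + 1) - (n + 2) x n`,
so once `p > 0` the increments `x (n + 2) - x n` are `O(x / n²)`. Hence `x` is bounded (the pair
sums `x n + x (n + 1)` grow by factors `1 + 2λ / (n + 1)²`, whose product converges), and then
both parity subsequences of `x` are Cauchy. Their limits are positive because the slightly smaller
`(n + 1) / (n + 2) · x n` is nondecreasing along each parity class.
-/

open Filter Topology

lemma summable_one_div_add_one_sq : Summable fun n : ℕ => 1 / ((n : ℝ) + 1) ^ 2 := by
  have h := (summable_nat_add_iff 1).mpr (Real.summable_one_div_nat_pow.mpr one_lt_two)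
  exact_mod_cast h

lemma le_mul_exp_tsum_of_le_mul_one_add {u a : ℕ → ℝ} (ha : ∀ n, 0 ≤ a n) (hsum : Summable a)
    (hu0 : 0 ≤ u 0) (hu : ∀ n, u (n + 1) ≤ u n * (1 + a n)) (n : ℕ) :
    u n ≤ u 0 * Real.exp (∑' k, a k) := by
  have partial_bound : ∀ n, u n ≤ u 0 * Real.exp (∑ k ∈ Finset.range n, a k) := by
    intro n
    induction n with
    | zero => simp
    | succ n ih =>
      calc u (n + 1) ≤ u n * (1 + a n) := hu n
        _ ≤ u 0 * Real.exp (∑ k ∈ Finset.range n, a k) * Real.exp (a n) := by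
          gcongr
          · linarith [ha n]
          · linarith [Real.add_one_le_exp (a n)]
        _ = u 0 * Real.exp (∑ k ∈ Finset.range (n + 1), a k) := by
          rw [Finset.sum_range_succ, Real.exp_add, mul_assoc]
  calc u n ≤ u 0 * Real.exp (∑ k ∈ Finset.range n, a k) := partial_bound n
    _ ≤ u 0 * Real.exp (∑' k, a k) := by
      gcongr
      exact hsum.sum_le_tsum _ fun k _ => ha k

section ShellRecurrence

variable {lam : ℝ} {p x : ℕ → ℝ}

lemma rec_shift
    (hrec : ∀ n : ℕ, 1 ≤ n →
      -lam * p n = ((n : ℝ) - 1) * ((n : ℝ) - 1 / 2) * p (n - 1)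
        - (n : ℝ) * ((n : ℝ) + 1 / 2) * p (n + 1)) (n : ℕ) :
    ((n : ℝ) + 1) * (2 * n + 3) * p (n + 2) = 2 * lam * p (n + 1) + n * (2 * n + 1) * p n := by
  have h := hrec (n + 1) (by omega)
  simp only [Nat.add_sub_cancel, Nat.cast_add, Nat.cast_one] at h
  linear_combination 2 * h

lemma pos_of_rec (hlam : 0 < lam) (hp0 : p 0 = 0) (hp1 : 0 < p 1)
    (hrec : ∀ n : ℕ, 1 ≤ n →
      -lam * p n = ((n : ℝ) - 1) * ((n : ℝ) - 1 / 2) * p (n - 1)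
        - (n : ℝ) * ((n : ℝ) + 1 / 2) * p (n + 1)) (n : ℕ) :
    0 < p (n + 1) := by
  suffices h : ∀ n, 0 ≤ p n ∧ 0 < p (n + 1) from (h n).2
  intro n
  induction n with
  | zero => exact ⟨hp0.ge, hp1⟩
  | succ n ih =>
    refine ⟨ih.2.le, pos_of_mul_pos_right (a := ((n : ℝ) + 1) * (2 * n + 3)) ?_ (by positivity)⟩
    rw [rec_shift hrec n]
    exact add_pos_of_pos_of_nonneg (by have := ih.2; positivity) (mul_nonneg (by positivity) ih.1)

lemma increment_eq
    (hrec : ∀ n : ℕ, 1 ≤ n →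
      -lam * p n = ((n : ℝ) - 1) * ((n : ℝ) - 1 / 2) * p (n - 1)
        - (n : ℝ) * ((n : ℝ) + 1 / 2) * p (n + 1))
    (hxp : ∀ n, x n = ((n : ℝ) + 1) * p (n + 1)) (n : ℕ) :
    ((n : ℝ) + 2) ^ 2 * (2 * n + 5) * (x (n + 2) - x n)
      = 2 * lam * (n + 3) * x (n + 1) - (n + 2) * x n := by
  have h := rec_shift hrec (n + 1)
  simp only [hxp]
  push_cast at h ⊢
  linear_combination ((n : ℝ) + 2) * (n + 3) * h

lemma sub_le_of_increment_eq (hlam : 0 ≤ lam) (hx : ∀ n, 0 ≤ x n)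
    (hinc : ∀ n : ℕ, ((n : ℝ) + 2) ^ 2 * (2 * n + 5) * (x (n + 2) - x n)
      = 2 * lam * (n + 3) * x (n + 1) - (n + 2) * x n) (n : ℕ) :
    x (n + 2) - x n ≤ 2 * lam * x (n + 1) / ((n : ℝ) + 1) ^ 2 := by
  have hpos : (0 : ℝ) < ((n : ℝ) + 2) ^ 2 * (2 * n + 5) := by positivity
  calc x (n + 2) - x n
      = (2 * lam * (n + 3) * x (n + 1) - (n + 2) * x n) / (((n : ℝ) + 2) ^ 2 * (2 * n + 5)) :=
        eq_div_of_mul_eq hpos.ne' (by rw [mul_comm]; exact hinc n)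
    _ ≤ 2 * lam * (n + 3) * x (n + 1) / (((n : ℝ) + 2) ^ 2 * (2 * n + 5)) := by
        gcongr
        linarith [mul_nonneg (show (0 : ℝ) ≤ n + 2 by positivity) (hx n)]
    _ ≤ 2 * lam * x (n + 1) / ((n : ℝ) + 1) ^ 2 := by
        rw [div_le_div_iff₀ hpos (by positivity)]
        have hlx : 0 ≤ lam * x (n + 1) := mul_nonneg hlam (hx (n + 1))
        nlinarith [mul_nonneg hlx (show (0 : ℝ) ≤ n ^ 3 + 8 * n ^ 2 + 21 * n + 17 by positivity)]

lemma mul_le_mul_of_increment_eq (hlam : 0 ≤ lam) (hx : ∀ n, 0 ≤ x n)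
    (hinc : ∀ n : ℕ, ((n : ℝ) + 2) ^ 2 * (2 * n + 5) * (x (n + 2) - x n)
      = 2 * lam * (n + 3) * x (n + 1) - (n + 2) * x n) (n : ℕ) :
    ((n : ℝ) + 3) * (2 * n + 3) * x n ≤ (n + 2) * (2 * n + 5) * x (n + 2) := by
  have hlx : 0 ≤ lam * ((n + 3) * x (n + 1)) := mul_nonneg hlam (mul_nonneg (by positivity) (hx _))
  have h : ((n : ℝ) + 2) * ((n + 2) * (2 * n + 5) * x (n + 2) - (n + 3) * (2 * n + 3) * x n)
      = 2 * lam * ((n + 3) * x (n + 1)) := by linear_combination hinc n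
  nlinarith [show (0 : ℝ) < n + 2 by positivity]

lemma sub_le_div_of_increment_eq (hlam : 0 ≤ lam) (hx : ∀ n, 0 ≤ x n)
    (hinc : ∀ n : ℕ, ((n : ℝ) + 2) ^ 2 * (2 * n + 5) * (x (n + 2) - x n)
      = 2 * lam * (n + 3) * x (n + 1) - (n + 2) * x n) (n : ℕ) :
    x n - x (n + 2) ≤ x n / ((n : ℝ) + 1) ^ 2 := by
  have h := mul_le_mul_of_increment_eq hlam hx hinc n
  rw [le_div_iff₀ (by positivity)]
  have hn : (0 : ℝ) ≤ n := n.cast_nonneg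
  nlinarith [hx n, hx (n + 2), mul_nonneg hn (hx n), mul_nonneg (mul_nonneg hn hn) (hx n)]

lemma exists_forall_le_of_increment_eq (hlam : 0 ≤ lam) (hx : ∀ n, 0 ≤ x n)
    (hinc : ∀ n : ℕ, ((n : ℝ) + 2) ^ 2 * (2 * n + 5) * (x (n + 2) - x n)
      = 2 * lam * (n + 3) * x (n + 1) - (n + 2) * x n) :
    ∃ K, ∀ n, x n ≤ K := by
  set a : ℕ → ℝ := fun n => 2 * lam * (1 / ((n : ℝ) + 1) ^ 2)
  have hstep : ∀ n, x (n + 1) + x (n + 2) ≤ (x n + x (n + 1)) * (1 + a n) := by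
    intro n
    have h := sub_le_of_increment_eq hlam hx hinc n
    have hexpand : (x n + x (n + 1)) * (1 + a n)
        = x n + x (n + 1) + x n * a n + 2 * lam * x (n + 1) / ((n : ℝ) + 1) ^ 2 := by
      simp only [a]; ring
    linarith [mul_nonneg (hx n) (show 0 ≤ a n by positivity)]
  refine ⟨(x 0 + x 1) * Real.exp (∑' k, a k), fun n => ?_⟩
  have hbound := le_mul_exp_tsum_of_le_mul_one_add (u := fun n => x n + x (n + 1))
    (fun n => by positivity) (summable_one_div_add_one_sq.mul_left _)
    (add_nonneg (hx 0) (hx 1)) hstep n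
  linarith [hx (n + 1)]

lemma abs_sub_le_of_increment_eq (hlam : 0 ≤ lam) (hx : ∀ n, 0 ≤ x n)
    (hinc : ∀ n : ℕ, ((n : ℝ) + 2) ^ 2 * (2 * n + 5) * (x (n + 2) - x n)
      = 2 * lam * (n + 3) * x (n + 1) - (n + 2) * x n) {K : ℝ} (hK : ∀ n, x n ≤ K) (n : ℕ) :
    |x (n + 2) - x n| ≤ (2 * lam + 1) * K / ((n : ℝ) + 1) ^ 2 := by
  have hK₀ : 0 ≤ K := (hx 0).trans (hK 0)
  rw [abs_sub_le_iff]
  constructor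
  · refine (sub_le_of_increment_eq hlam hx hinc n).trans ?_
    gcongr ?_ / _
    nlinarith [hK (n + 1)]
  · refine (sub_le_div_of_increment_eq hlam hx hinc n).trans ?_
    gcongr ?_ / _
    nlinarith [hK n]

/-- The weight `(n + 1) / (n + 2)` compensates the factor `(n + 3) (2n + 3) / ((n + 2) (2n + 5))`
of `mul_le_mul_of_increment_eq`. -/
lemma div_mul_le_div_mul_of_increment_eq (hlam : 0 ≤ lam) (hx : ∀ n, 0 ≤ x n)
    (hinc : ∀ n : ℕ, ((n : ℝ) + 2) ^ 2 * (2 * n + 5) * (x (n + 2) - x n)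
      = 2 * lam * (n + 3) * x (n + 1) - (n + 2) * x n) (n : ℕ) :
    ((n : ℝ) + 1) / (n + 2) * x n ≤ ((n + 2 : ℕ) + 1) / ((n + 2 : ℕ) + 2) * x (n + 2) := by
  have h := mul_le_mul_of_increment_eq hlam hx hinc n
  push_cast
  rw [div_mul_eq_mul_div, div_mul_eq_mul_div, div_le_div_iff₀ (by positivity) (by positivity)]
  have hn : (0 : ℝ) ≤ n := n.cast_nonneg
  nlinarith [hx n, mul_nonneg hn (hx n)]

lemma exists_pos_tendsto_of_increment_eq (hlam : 0 ≤ lam) (hx : ∀ n, 0 ≤ x n)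
    (hinc : ∀ n : ℕ, ((n : ℝ) + 2) ^ 2 * (2 * n + 5) * (x (n + 2) - x n)
      = 2 * lam * (n + 3) * x (n + 1) - (n + 2) * x n) {m : ℕ} (hm : 0 < x m) :
    ∃ L, 0 < L ∧ Tendsto (fun k => x (m + 2 * k)) atTop (𝓝 L) := by
  obtain ⟨K, hK⟩ := exists_forall_le_of_increment_eq hlam hx hinc
  have hdist : ∀ k, dist (x (m + 2 * k)) (x (m + 2 * (k + 1)))
      ≤ (2 * lam + 1) * K * (1 / ((k : ℝ) + 1) ^ 2) := by
    intro k
    rw [Real.dist_eq, abs_sub_comm, mul_one_div]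
    refine (abs_sub_le_of_increment_eq hlam hx hinc hK (m + 2 * k)).trans ?_
    have hK₀ : 0 ≤ K := (hx 0).trans (hK 0)
    gcongr
    linarith [(Nat.cast_nonneg m : (0 : ℝ) ≤ m)]
  obtain ⟨L, hL⟩ := cauchySeq_tendsto_of_complete <|
    cauchySeq_of_dist_le_of_summable _ hdist (summable_one_div_add_one_sq.mul_left _)
  set g : ℕ → ℝ := fun n => ((n : ℝ) + 1) / (n + 2) * x n
  have hg : Monotone fun k => g (m + 2 * k) :=
    monotone_nat_of_le_succ fun k => div_mul_le_div_mul_of_increment_eq hlam hx hinc (m + 2 * k)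
  have hgx : ∀ n, g n ≤ x n := fun n =>
    mul_le_of_le_one_left (hx n) ((div_le_one (by positivity)).mpr (by linarith))
  refine ⟨L, ?_, hL⟩
  calc 0 < g m := by positivity
    _ ≤ L := ge_of_tendsto' hL fun k => (hg (Nat.zero_le k)).trans (hgx _)

end ShellRecurrence

/-- Let `λ > 0` and let `(p_n)` with `p_0 = 0`, `p_1 > 0` satisfy
`-λ p_n = (n-1)(n-1/2) p_{n-1} - n(n+1/2) p_{n+1}` for all `n ≥ 1`. Then the
limits `lim (2n+1) p_{2n+1}` and `lim (2n) p_{2n}` exist, are finite, and are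
strictly positive. -/
theorem stmt17 (lam : ℝ) (hlam : 0 < lam) (p : ℕ → ℝ)
    (hp0 : p 0 = 0) (hp1 : 0 < p 1)
    (hrec : ∀ n : ℕ, 1 ≤ n →
      -lam * p n = ((n : ℝ) - 1) * ((n : ℝ) - 1 / 2) * p (n - 1)
        - (n : ℝ) * ((n : ℝ) + 1 / 2) * p (n + 1)) :
    ∃ c₁ c₂ : ℝ, 0 < c₁ ∧ 0 < c₂ ∧
      Filter.Tendsto (fun n : ℕ => (2 * (n : ℝ) + 1) * p (2 * n + 1))
        Filter.atTop (nhds c₁) ∧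
      Filter.Tendsto (fun n : ℕ => (2 * (n : ℝ)) * p (2 * n))
        Filter.atTop (nhds c₂) := by
  set x : ℕ → ℝ := fun n => ((n : ℝ) + 1) * p (n + 1)
  have hx : ∀ n, 0 < x n := fun n => mul_pos (by positivity) (pos_of_rec hlam hp0 hp1 hrec n)
  have hinc := increment_eq hrec fun _ => rfl
  obtain ⟨c₁, hc₁, hodd⟩ := exists_pos_tendsto_of_increment_eq hlam.le (hx · |>.le) hinc (hx 0)
  obtain ⟨c₂, hc₂, heven⟩ := exists_pos_tendsto_of_increment_eq hlam.le (hx · |>.le) hinc (hx 1)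
  refine ⟨c₁, c₂, hc₁, hc₂, ?_, ?_⟩
  · refine hodd.congr fun k => ?_
    simp only [x, zero_add]
    push_cast
    ring
  · rw [← tendsto_add_atTop_iff_nat 1]
    refine heven.congr fun k => ?_
    simp only [x, show 1 + 2 * k + 1 = 2 * (k + 1) by omega]
    push_cast
    ring
end
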